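/- Let X be a nonempty compact length space, I = [a,b] ⊆ ℝ a nondegenerate closed bounded interval, c > 0, and for each j ∈ ℕ let f_j : I → ℝ be continuous with f_j(t) ≥ c for all t ∈ I; assume (f_j) converges uniformly on I to f_∞. Then each null distance d̂_{f_j} and d̂_{f_∞} is a metric on I × X inducing the (compact) product topology, and the Gromov–Hausdorff distance between the compact metric spaces (I × X, d̂_{f_j}) and (I × X, d̂_{f_∞}) tends to 0 as j → ∞. -/

import Mathlib

open MeasureTheory

universe u

/-- Causal relation of the warped product `I ×_f X`: `(s,x) ≼_f (t,y)` iff `s ≤ t` and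
`d(x,y) ≤ ∫_s^t f(u)⁻¹ du`. -/
def WPCausal {X : Type u} [MetricSpace X] (f : ℝ → ℝ) (p q : ℝ × X) : Prop :=
  p.1 ≤ q.1 ∧
    ENNReal.ofReal (dist p.2 q.2) ≤ ∫⁻ u in Set.Ioc p.1 q.1, ENNReal.ofReal ((f u)⁻¹)

/-- `σ` is a piecewise causal chain with `n+1` segments from `p` to `q` inside `I × X`. -/
def WPChain {X : Type u} [MetricSpace X] (I : Set ℝ) (f : ℝ → ℝ) (p q : ℝ × X) (n : ℕ)
    (σ : ℕ → ℝ × X) : Prop :=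
  σ 0 = p ∧ σ (n + 1) = q ∧ (∀ i ≤ n + 1, (σ i).1 ∈ I) ∧
    ∀ i ≤ n, WPCausal f (σ i) (σ (i + 1)) ∨ WPCausal f (σ (i + 1)) (σ i)

/-- The null distance of the warped product `I ×_f X`. -/
noncomputable def nullDist {X : Type u} [MetricSpace X] (I : Set ℝ) (f : ℝ → ℝ)
    (p q : ℝ × X) : ℝ :=
  sInf { r | ∃ n σ, WPChain I f p q n σ ∧
    r = ∑ i ∈ Finset.range (n + 1), |(σ (i + 1)).1 - (σ i).1| }

/-- `d` is a metric on the set of points of `I × X`. -/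
def IsMetricOnStrip {X : Type u} (I : Set ℝ) (d : ℝ × X → ℝ × X → ℝ) : Prop :=
  (∀ p q : ℝ × X, p.1 ∈ I → q.1 ∈ I → (d p q = 0 ↔ p = q)) ∧
  (∀ p q : ℝ × X, p.1 ∈ I → q.1 ∈ I → d p q = d q p) ∧
  (∀ p q r : ℝ × X, p.1 ∈ I → q.1 ∈ I → r.1 ∈ I → d p r ≤ d p q + d q r)

/-- `d` induces the product topology on `I × X` (mutual ball containment against the
max-product distance). -/
def InducesProductTopology {X : Type u} [MetricSpace X] (I : Set ℝ)
    (d : ℝ × X → ℝ × X → ℝ) : Prop :=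
  ∀ p : ℝ × X, p.1 ∈ I → ∀ ε : ℝ, 0 < ε →
    (∃ δ > 0, ∀ q : ℝ × X, q.1 ∈ I → max |p.1 - q.1| (dist p.2 q.2) < δ → d p q < ε) ∧
    (∃ δ > 0, ∀ q : ℝ × X, q.1 ∈ I → d p q < δ → max |p.1 - q.1| (dist p.2 q.2) < ε)

/-- The Gromov--Hausdorff distance between `(I × X, d)` and `(I × X, d')` is at most `ε`:
both embed isometrically into a common metric space with mutually `ε`-dense images. -/
def GHClose {X : Type u} (I : Set ℝ) (d d' : ℝ × X → ℝ × X → ℝ) (ε : ℝ) : Prop :=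
  ∃ (Z : Type u) (dZ : Z → Z → ℝ),
    ((∀ z w, dZ z w = 0 ↔ z = w) ∧ (∀ z w, dZ z w = dZ w z) ∧
      ∀ z w v, dZ z v ≤ dZ z w + dZ w v) ∧
    ∃ φ ψ : {p : ℝ × X // p.1 ∈ I} → Z,
      (∀ u v, dZ (φ u) (φ v) = d u.1 v.1) ∧
      (∀ u v, dZ (ψ u) (ψ v) = d' u.1 v.1) ∧
      (∀ u, ∃ v, dZ (φ u) (ψ v) ≤ ε) ∧ (∀ v, ∃ u, dZ (φ u) (ψ v) ≤ ε)

/-!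
Along a causal segment the time step bounds itself and, since `f ≥ c`, also `c` times the spatial
step; summing over a chain gives `max |Δt| (c · d) ≤ d̂_f`. Conversely, zigzagging between two
nearby times while following a fine approximate geodesic of the length space `X` gives
`d̂_f ≤ |Δt| + C · d` when `f ≤ C`. So `d̂_f` is a metric comparable to the product metric.

If `|1/f - 1/f'| ≤ δ`, an `f`-causal segment of duration `Δt` becomes `f'`-causal after moving
its endpoint by at most `δ · Δt` in `X`: go `f'`-causally to a point along an approximate geodesic,
then zigzag the rest of the way. Hence `d̂_{f'} ≤ (1 + C δ) d̂_f`, the null distances of the `f_j`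
converge uniformly to that of `f_∞`, and gluing two copies of `I × X` along the identity bounds
their Gromov–Hausdorff distance by the uniform distance between the metrics.
-/

open Set

theorem TendstoUniformlyOn.inv_of_le {ι α : Type*} {F : ι → α → ℝ} {f : α → ℝ} {l : Filter ι}
    {s : Set α} {c : ℝ} (hF : TendstoUniformlyOn F f l s) (hc : 0 < c)
    (hFc : ∀ i, ∀ x ∈ s, c ≤ F i x) (hfc : ∀ x ∈ s, c ≤ f x) :
    TendstoUniformlyOn (fun i x => (F i x)⁻¹) (fun x => (f x)⁻¹) l s := by
  rw [Metric.tendstoUniformlyOn_iff] at hF ⊢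
  intro ε hε
  filter_upwards [hF (ε * c ^ 2) (by positivity)] with i hi x hx
  have hFx := hc.trans_le (hFc i x hx)
  have hfx := hc.trans_le (hfc x hx)
  rw [Real.dist_eq, inv_sub_inv hfx.ne' hFx.ne', abs_div, abs_of_pos (mul_pos hfx hFx),
    div_lt_iff₀ (mul_pos hfx hFx), abs_sub_comm, ← Real.dist_eq]
  calc dist (f x) (F i x) < ε * c ^ 2 := hi x hx
    _ ≤ ε * (f x * F i x) := by gcongr; nlinarith [hfc x hx, hFc i x hx]

section LengthSpace

def IsLengthSpace (X : Type*) [PseudoMetricSpace X] : Prop :=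
  ∀ x y : X, ∀ ε : ℝ, 0 < ε → ∃ z : X, max (dist x z) (dist z y) ≤ dist x y / 2 + ε

variable {X : Type*} [PseudoMetricSpace X]

theorem IsLengthSpace.exists_dyadic_path (hX : IsLengthSpace X) (M : ℕ) :
    ∀ (x y : X) (ε : ℝ), 0 < ε → ∃ z : ℕ → X, z 0 = x ∧ z (2 ^ M) = y ∧
      ∀ i < 2 ^ M, dist (z i) (z (i + 1)) ≤ dist x y / 2 ^ M + ε := by
  induction M with
  | zero =>
    intro x y ε hε
    refine ⟨fun i => if i = 0 then x else y, rfl, rfl, fun i hi => ?_⟩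
    obtain rfl : i = 0 := by omega
    simp [hε.le]
  | succ M ih =>
    intro x y ε hε
    obtain ⟨z, hz0, hzM, hz⟩ := ih x y (ε / 2) (half_pos hε)
    -- insert an approximate midpoint `m i` between `z i` and `z (i + 1)`
    choose m hm using fun i => hX (z i) (z (i + 1)) (ε / 4) (by positivity)
    have hstep : ∀ i < 2 ^ M, dist (z i) (z (i + 1)) / 2 + ε / 4 ≤
        dist x y / 2 ^ (M + 1) + ε := fun i hi => by
      have := hz i hi
      rw [pow_succ]
      linarith [show dist x y / (2 ^ M * 2) = dist x y / 2 ^ M / 2 by ring]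
    refine ⟨fun k => if k % 2 = 0 then z (k / 2) else m (k / 2), by simpa using hz0, ?_, ?_⟩
    · simpa [pow_succ, Nat.mul_mod_left] using hzM
    · intro k hk
      rcases Nat.even_or_odd' k with ⟨i, rfl | rfl⟩
      · have hi : i < 2 ^ M := by rw [pow_succ] at hk; omega
        simp only [show 2 * i % 2 = 0 by omega, show (2 * i + 1) % 2 = 1 by omega,
          show 2 * i / 2 = i by omega, show (2 * i + 1) / 2 = i by omega, if_true, one_ne_zero,
          if_false]
        exact (le_max_left _ _).trans ((hm i).trans (hstep i hi))
      · have hi : i < 2 ^ M := by rw [pow_succ] at hk; omega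
        simp only [show (2 * i + 1) % 2 = 1 by omega, show (2 * i + 1 + 1) % 2 = 0 by omega,
          show (2 * i + 1) / 2 = i by omega, show (2 * i + 1 + 1) / 2 = i + 1 by omega, if_true,
          one_ne_zero, if_false]
        exact (le_max_right _ _).trans ((hm i).trans (hstep i hi))

theorem IsLengthSpace.exists_even_path (hX : IsLengthSpace X) (x y : X) {η : ℝ} (hη : 0 < η) :
    ∃ N : ℕ, 0 < N ∧ ∃ s : ℝ, 0 < s ∧ s ≤ η ∧ 2 * N * s = dist x y + η ∧
      ∃ z : ℕ → X, z 0 = x ∧ z (2 * N) = y ∧ ∀ i < 2 * N, dist (z i) (z (i + 1)) ≤ s := by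
  obtain ⟨M, hM⟩ := pow_unbounded_of_one_lt ((dist x y + η) / η) one_lt_two
  have hK : (0 : ℝ) < 2 ^ (M + 1) := by positivity
  obtain ⟨z, hz0, hzK, hz⟩ := hX.exists_dyadic_path (M + 1) x y (η / 2 ^ (M + 1)) (by positivity)
  refine ⟨2 ^ M, by positivity, (dist x y + η) / 2 ^ (M + 1), by positivity, ?_, ?_,
    z, hz0, by rwa [← pow_succ'], fun i hi => ?_⟩
  · rw [div_le_iff₀ hK]
    rw [div_lt_iff₀ hη] at hM
    calc dist x y + η ≤ 2 ^ M * η := hM.le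
      _ ≤ η * 2 ^ (M + 1) := by rw [pow_succ]; nlinarith [pow_pos two_pos M (M₀ := ℝ)]
  · push_cast
    field_simp
    ring
  · rw [add_div]
    exact hz i (by rwa [pow_succ'])

theorem IsLengthSpace.exists_dist_le_and_dist_le (hX : IsLengthSpace X) (x y : X) {l ε : ℝ}
    (hl : 0 ≤ l) (hld : l ≤ dist x y) (hε : 0 < ε) :
    ∃ w : X, dist x w ≤ l ∧ dist w y ≤ dist x y - l + ε := by
  obtain ⟨N, -, s, hs, hsε, hNs, z, hz0, hzN, hz⟩ := hX.exists_even_path x y (half_pos hε)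
  have hdist : ∀ {i j : ℕ}, i ≤ j → j ≤ 2 * N → dist (z i) (z j) ≤ (j - i) * s := by
    intro i j hij hj
    refine (dist_le_Ico_sum_of_dist_le hij fun {k} _ hk => hz k (by omega)).trans_eq ?_
    rw [Finset.sum_const, Nat.card_Ico, nsmul_eq_mul, Nat.cast_sub hij]
  -- stop at the last point of the path whose arc length from `x` is at most `l`
  set j := ⌊l / s⌋₊
  have hjl : j * s ≤ l := (le_div_iff₀ hs).1 (Nat.floor_le (by positivity))
  have hlj : l < (j + 1) * s := (div_lt_iff₀ hs).1 (Nat.lt_floor_add_one _)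
  have hjN : j ≤ 2 * N := by
    have := hdist (Nat.zero_le (2 * N)) le_rfl
    rw [hz0, hzN] at this
    push_cast at this
    have : (j : ℝ) ≤ 2 * N := le_of_mul_le_mul_right (by linarith) hs
    exact_mod_cast this
  refine ⟨z j, ?_, ?_⟩
  · simpa [hz0] using (hdist (Nat.zero_le j) hjN).trans (by simpa using hjl)
  · have := hdist hjN le_rfl
    rw [hzN, Nat.cast_mul, Nat.cast_ofNat] at this
    nlinarith

end LengthSpace

section Chains

variable {X : Type u}

def nullLength (σ : ℕ → ℝ × X) (n : ℕ) : ℝ :=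
  ∑ i ∈ Finset.range (n + 1), |(σ (i + 1)).1 - (σ i).1|

theorem nullLength_nonneg (σ : ℕ → ℝ × X) (n : ℕ) : 0 ≤ nullLength σ n :=
  Finset.sum_nonneg fun _ _ => abs_nonneg _

variable [MetricSpace X] {I : Set ℝ} {g : ℝ → ℝ} {p q r : ℝ × X} {n m : ℕ} {σ τ : ℕ → ℝ × X}

theorem WPCausal.refl (g : ℝ → ℝ) (p : ℝ × X) : WPCausal g p p :=
  ⟨le_rfl, by simp⟩

theorem nullDist_le_nullLength (h : WPChain I g p q n σ) : nullDist I g p q ≤ nullLength σ n :=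
  csInf_le ⟨0, fun _ ⟨n, σ, _, hr⟩ => hr ▸ nullLength_nonneg σ n⟩ ⟨n, σ, h, rfl⟩

theorem exists_nullLength_lt (hne : ∃ n σ, WPChain I g p q n σ) {ε : ℝ} (hε : 0 < ε) :
    ∃ n σ, WPChain I g p q n σ ∧ nullLength σ n < nullDist I g p q + ε := by
  obtain ⟨n, σ, hne⟩ := hne
  have : Set.Nonempty {r | ∃ n σ, WPChain I g p q n σ ∧ r = nullLength σ n} := ⟨_, n, σ, hne, rfl⟩
  obtain ⟨_, ⟨n, σ, h, rfl⟩, hlt⟩ := Real.lt_sInf_add_pos this hε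
  exact ⟨n, σ, h, hlt⟩

theorem wpChain_pair (hp : p.1 ∈ I) (hq : q.1 ∈ I) (h : WPCausal g p q ∨ WPCausal g q p) :
    WPChain I g p q 0 (fun i => if i = 0 then p else q) ∧
      nullLength (fun i => if i = 0 then p else q) 0 = |q.1 - p.1| := by
  refine ⟨⟨rfl, rfl, fun i hi => ?_, fun i hi => ?_⟩, by simp [nullLength]⟩
  · rcases (show i = 0 ∨ i = 1 by omega) with rfl | rfl <;> simpa
  · obtain rfl : i = 0 := by omega
    exact h

theorem WPCausal.nullDist_le (hp : p.1 ∈ I) (hq : q.1 ∈ I) (h : WPCausal g p q) :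
    nullDist I g p q ≤ q.1 - p.1 := by
  obtain ⟨hchain, hlen⟩ := wpChain_pair hp hq (.inl h)
  simpa [hlen, abs_of_nonneg (sub_nonneg.2 h.1)] using nullDist_le_nullLength hchain

theorem WPChain.reverse (h : WPChain I g p q n σ) :
    WPChain I g q p n (fun i => σ (n + 1 - i)) ∧
      nullLength (fun i => σ (n + 1 - i)) n = nullLength σ n := by
  obtain ⟨h0, hend, hmem, hcaus⟩ := h
  refine ⟨⟨by simpa using hend, by simpa using h0, fun i _ => hmem _ (by omega),
    fun i hi => ?_⟩, ?_⟩
  · simp only [show n + 1 - (i + 1) = n - i by omega]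
    rw [show n + 1 - i = n - i + 1 by omega]
    exact (hcaus (n - i) (by omega)).symm
  · rw [nullLength, ← Finset.sum_range_reflect]
    refine Finset.sum_congr rfl fun i hi => ?_
    have := Finset.mem_range.1 hi
    rw [show n + 1 - (n + 1 - 1 - i + 1) = i by omega,
      show n + 1 - (n + 1 - 1 - i) = i + 1 by omega, abs_sub_comm]

theorem nullDist_comm (p q : ℝ × X) : nullDist I g p q = nullDist I g q p := by
  unfold nullDist
  congr 1
  ext r
  constructor <;> rintro ⟨n, σ, h, rfl⟩ <;>
    exact ⟨n, _, (WPChain.reverse h).1, (WPChain.reverse h).2.symm⟩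

def seqAppend {α : Type*} (z₁ z₂ : ℕ → α) (N : ℕ) : ℕ → α :=
  fun i => if i ≤ N then z₁ i else z₂ (i - N)

theorem seqAppend_of_le {α : Type*} (z₁ z₂ : ℕ → α) {N i : ℕ} (h : i ≤ N) :
    seqAppend z₁ z₂ N i = z₁ i := if_pos h

theorem seqAppend_add {α : Type*} {z₁ z₂ : ℕ → α} {N : ℕ} (h : z₁ N = z₂ 0) (i : ℕ) :
    seqAppend z₁ z₂ N (N + i) = z₂ i := by
  rcases i.eq_zero_or_pos with rfl | hi
  · simpa [seqAppend] using h
  · simp [seqAppend, show ¬ N + i ≤ N by omega]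

theorem WPChain.append (h₁ : WPChain I g p q n σ) (h₂ : WPChain I g q r m τ) :
    WPChain I g p r (n + m + 1) (seqAppend σ τ (n + 1)) ∧
      nullLength (seqAppend σ τ (n + 1)) (n + m + 1) = nullLength σ n + nullLength τ m := by
  obtain ⟨h0, hend, hmem, hcaus⟩ := h₁
  obtain ⟨g0, gend, gmem, gcaus⟩ := h₂
  have hjoin : σ (n + 1) = τ 0 := hend.trans g0.symm
  have hleft := fun i (hi : i ≤ n + 1) => seqAppend_of_le σ τ hi
  have hright := seqAppend_add hjoin
  refine ⟨⟨by rw [hleft 0 (by omega), h0], ?_, fun i hi => ?_, fun i hi => ?_⟩, ?_⟩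
  · rw [show n + m + 1 + 1 = n + 1 + (m + 1) by omega, hright, gend]
  · by_cases hin : i ≤ n + 1
    · rw [hleft i hin]; exact hmem i hin
    · obtain ⟨j, rfl⟩ : ∃ j, i = n + 1 + j := ⟨i - (n + 1), by omega⟩
      rw [hright]; exact gmem j (by omega)
  · by_cases hin : i ≤ n
    · rw [hleft i (by omega), hleft (i + 1) (by omega)]
      exact hcaus i hin
    · obtain ⟨j, rfl⟩ : ∃ j, i = n + 1 + j := ⟨i - (n + 1), by omega⟩
      rw [show n + 1 + j + 1 = n + 1 + (j + 1) by omega, hright, hright]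
      exact gcaus j (by omega)
  · rw [nullLength, show n + m + 1 + 1 = n + 1 + (m + 1) by omega, Finset.sum_range_add]
    congr 1
    · refine Finset.sum_congr rfl fun i hi => ?_
      have := Finset.mem_range.1 hi
      rw [hleft i (by omega), hleft (i + 1) (by omega)]
    · refine Finset.sum_congr rfl fun i _ => ?_
      rw [show n + 1 + i + 1 = n + 1 + (i + 1) by omega, hright, hright]

theorem nullDist_triangle (hpq : ∃ n σ, WPChain I g p q n σ) (hqr : ∃ n σ, WPChain I g q r n σ) :
    nullDist I g p r ≤ nullDist I g p q + nullDist I g q r := by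
  refine le_of_forall_pos_le_add fun ε hε => ?_
  obtain ⟨n, σ, hσ, hσlt⟩ := exists_nullLength_lt hpq (half_pos hε)
  obtain ⟨m, τ, hτ, hτlt⟩ := exists_nullLength_lt hqr (half_pos hε)
  have := nullDist_le_nullLength (hσ.append hτ).1
  rw [(hσ.append hτ).2] at this
  linarith

theorem WPChain.le_mul_nullLength {ρ : ℝ × X → ℝ × X → ℝ} {K : ℝ}
    (hsymm : ∀ p q : ℝ × X, p.1 ∈ I → q.1 ∈ I → ρ p q = ρ q p)
    (htri : ∀ p q r : ℝ × X, p.1 ∈ I → q.1 ∈ I → r.1 ∈ I → ρ p r ≤ ρ p q + ρ q r)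
    (hcausal : ∀ p q : ℝ × X, p.1 ∈ I → q.1 ∈ I → WPCausal g p q → ρ p q ≤ K * (q.1 - p.1))
    (h : WPChain I g p q n σ) : ρ p q ≤ K * nullLength σ n := by
  obtain ⟨h0, hend, hmem, hcaus⟩ := h
  have hstep : ∀ i ≤ n, ρ (σ i) (σ (i + 1)) ≤ K * |(σ (i + 1)).1 - (σ i).1| := by
    intro i hi
    have hi₀ := hmem i (by omega)
    have hi₁ := hmem (i + 1) (by omega)
    rcases hcaus i hi with hc | hc
    · rw [abs_of_nonneg (sub_nonneg.2 hc.1)]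
      exact hcausal _ _ hi₀ hi₁ hc
    · rw [hsymm _ _ hi₀ hi₁, abs_sub_comm, abs_of_nonneg (sub_nonneg.2 hc.1)]
      exact hcausal _ _ hi₁ hi₀ hc
  have hpartial : ∀ k ≤ n + 1,
      ρ (σ 0) (σ k) ≤ K * ∑ i ∈ Finset.range k, |(σ (i + 1)).1 - (σ i).1| := by
    intro k
    induction k with
    | zero =>
      intro _
      simpa using hcausal _ _ (hmem 0 (by omega)) (hmem 0 (by omega)) (.refl g (σ 0))
    | succ k ih =>
      intro hk
      rw [Finset.sum_range_succ, mul_add]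
      exact (htri _ _ _ (hmem 0 (by omega)) (hmem k (by omega)) (hmem (k + 1) hk)).trans
        (add_le_add (ih (by omega)) (hstep k (by omega)))
  simpa [h0, hend, nullLength] using hpartial (n + 1) le_rfl

theorem le_mul_nullDist {ρ : ℝ × X → ℝ × X → ℝ} {K : ℝ} (hK : 0 < K)
    (hsymm : ∀ p q : ℝ × X, p.1 ∈ I → q.1 ∈ I → ρ p q = ρ q p)
    (htri : ∀ p q r : ℝ × X, p.1 ∈ I → q.1 ∈ I → r.1 ∈ I → ρ p r ≤ ρ p q + ρ q r)
    (hcausal : ∀ p q : ℝ × X, p.1 ∈ I → q.1 ∈ I → WPCausal g p q → ρ p q ≤ K * (q.1 - p.1))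
    (hne : ∃ n σ, WPChain I g p q n σ) : ρ p q ≤ K * nullDist I g p q := by
  rw [← div_le_iff₀' hK]
  obtain ⟨n, σ, h⟩ := hne
  refine le_csInf ⟨_, n, σ, h, rfl⟩ ?_
  rintro _ ⟨n, σ, h, rfl⟩
  rw [div_le_iff₀' hK]
  exact WPChain.le_mul_nullLength hsymm htri hcausal h

end Chains

section Strip

theorem ofReal_div_le_setLIntegral_inv {g : ℝ → ℝ} {u v C : ℝ} (hC : 0 < C)
    (hg : ∀ t ∈ Ioc u v, g t ∈ Ioc 0 C) :
    ENNReal.ofReal ((v - u) / C) ≤ ∫⁻ t in Ioc u v, ENNReal.ofReal (g t)⁻¹ := by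
  calc ENNReal.ofReal ((v - u) / C) = ∫⁻ _ in Ioc u v, ENNReal.ofReal C⁻¹ := by
        rw [setLIntegral_const, Real.volume_Ioc, ← ENNReal.ofReal_mul (by positivity),
          div_eq_inv_mul]
    _ ≤ ∫⁻ t in Ioc u v, ENNReal.ofReal (g t)⁻¹ :=
        setLIntegral_mono' measurableSet_Ioc fun t ht =>
          ENNReal.ofReal_le_ofReal (inv_anti₀ (hg t ht).1 (hg t ht).2)

theorem setLIntegral_inv_le_ofReal_div {g : ℝ → ℝ} {u v c : ℝ} (hc : 0 < c)
    (hg : ∀ t ∈ Ioc u v, c ≤ g t) :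
    ∫⁻ t in Ioc u v, ENNReal.ofReal (g t)⁻¹ ≤ ENNReal.ofReal ((v - u) / c) := by
  calc ∫⁻ t in Ioc u v, ENNReal.ofReal (g t)⁻¹ ≤ ∫⁻ _ in Ioc u v, ENNReal.ofReal c⁻¹ :=
        setLIntegral_mono' measurableSet_Ioc fun t ht =>
          ENNReal.ofReal_le_ofReal (inv_anti₀ hc (hg t ht))
    _ = ENNReal.ofReal ((v - u) / c) := by
        rw [setLIntegral_const, Real.volume_Ioc, ← ENNReal.ofReal_mul (by positivity),
          div_eq_inv_mul]

theorem exists_mem_Icc_abs_sub_eq {a b t h : ℝ} (ht : t ∈ Icc a b) (h0 : 0 ≤ h)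
    (hh : 2 * h ≤ b - a) : ∃ u ∈ Icc a b, |u - t| = h := by
  by_cases htop : t + h ≤ b
  · exact ⟨t + h, ⟨by linarith [ht.1], htop⟩, by simp [abs_of_nonneg h0]⟩
  · exact ⟨t - h, ⟨by linarith, by linarith [ht.2]⟩, by simp [abs_of_nonneg h0]⟩

theorem Ioc_subset_Icc_of_mem {a b u v : ℝ} (hu : u ∈ Icc a b) (hv : v ∈ Icc a b) :
    Ioc u v ⊆ Icc a b :=
  Ioc_subset_Icc_self.trans (Set.Icc_subset _ hu hv)

variable {X : Type u} [MetricSpace X] {a b c C : ℝ} {g : ℝ → ℝ} {p q : ℝ × X}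

theorem WPCausal.mul_dist_le (hc : 0 < c) (hg : ∀ t ∈ Icc a b, c ≤ g t) (hp : p.1 ∈ Icc a b)
    (hq : q.1 ∈ Icc a b) (h : WPCausal g p q) : c * dist p.2 q.2 ≤ q.1 - p.1 := by
  have := h.2.trans (setLIntegral_inv_le_ofReal_div hc fun t ht =>
    hg t (Ioc_subset_Icc_of_mem hp hq ht))
  rw [ENNReal.ofReal_le_ofReal_iff (div_nonneg (sub_nonneg.2 h.1) hc.le), le_div_iff₀' hc] at this
  exact this

theorem wpCausal_or_of_mul_dist_le (hg : ∀ t ∈ Icc a b, g t ∈ Ioc 0 C) (hp : p.1 ∈ Icc a b)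
    (hq : q.1 ∈ Icc a b) (h : C * dist p.2 q.2 ≤ |q.1 - p.1|) :
    WPCausal g p q ∨ WPCausal g q p := by
  have hC : 0 < C := (hg p.1 hp).1.trans_le (hg p.1 hp).2
  have key : ∀ {p q : ℝ × X}, p.1 ∈ Icc a b → q.1 ∈ Icc a b → p.1 ≤ q.1 →
      C * dist p.2 q.2 ≤ q.1 - p.1 → WPCausal g p q := fun hp hq hpq h =>
    ⟨hpq, (ENNReal.ofReal_le_ofReal ((le_div_iff₀' hC).2 h)).trans
      (ofReal_div_le_setLIntegral_inv hC fun t ht => hg t (Ioc_subset_Icc_of_mem hp hq ht))⟩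
  rcases le_total p.1 q.1 with hpq | hqp
  · exact .inl (key hp hq hpq (by rwa [abs_of_nonneg (sub_nonneg.2 hpq)] at h))
  · refine .inr (key hq hp hqp ?_)
    rwa [dist_comm, abs_sub_comm, abs_of_nonneg (sub_nonneg.2 hqp)] at h

theorem exists_wpChain_horizontal (hX : IsLengthSpace X) (hab : a < b)
    (hg : ∀ t ∈ Icc a b, g t ∈ Ioc 0 C) {t : ℝ} (ht : t ∈ Icc a b) (x y : X) {ε : ℝ}
    (hε : 0 < ε) :
    ∃ n σ, WPChain (Icc a b) g (t, x) (t, y) n σ ∧ nullLength σ n ≤ C * dist x y + ε := by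
  have hC : 0 < C := (hg t ht).1.trans_le (hg t ht).2
  set η := min ((b - a) / (2 * C)) (ε / C)
  have hη : 0 < η := lt_min (div_pos (by linarith) (by positivity)) (by positivity)
  obtain ⟨N, hN, s, hs, hsη, hNs, z, hz0, hzN, hz⟩ := hX.exists_even_path x y hη
  obtain ⟨u, hu, hut⟩ := exists_mem_Icc_abs_sub_eq ht (by positivity) (show 2 * (C * s) ≤ b - a by
    have := (hsη.trans (min_le_left _ _))
    rw [le_div_iff₀ (by positivity)] at this
    linarith)
  set σ : ℕ → ℝ × X := fun j => (if Even j then t else u, z j)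
  have hσI : ∀ j, (σ j).1 ∈ Icc a b := fun j => by
    simp only [σ]; split <;> assumption
  have hgap : ∀ j, |(σ (j + 1)).1 - (σ j).1| = C * s := fun j => by
    rcases Nat.even_or_odd j with hj | hj
    · simpa [σ, hj, Nat.even_add_one] using hut
    · simpa [σ, Nat.not_even_iff_odd.2 hj, Nat.even_add_one, abs_sub_comm] using hut
  refine ⟨2 * N - 1, σ, ⟨by simp [σ, hz0], ?_, fun j _ => hσI j, fun j hj => ?_⟩, ?_⟩
  · simp [σ, show 2 * N - 1 + 1 = 2 * N by omega, hzN]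
  · refine wpCausal_or_of_mul_dist_le hg (hσI j) (hσI (j + 1)) ?_
    rw [hgap]
    exact mul_le_mul_of_nonneg_left (hz j (by omega)) hC.le
  · calc nullLength σ (2 * N - 1) = 2 * N * (C * s) := by
          simp [nullLength, hgap, show 2 * N - 1 + 1 = 2 * N by omega]
      _ = C * (dist x y + η) := by rw [← hNs]; ring
      _ ≤ C * dist x y + ε := by
          have := mul_le_mul_of_nonneg_left (min_le_right _ _ : η ≤ ε / C) hC.le
          rw [mul_div_cancel₀ _ hC.ne'] at this
          linarith

theorem exists_wpChain_nullLength_le (hX : IsLengthSpace X) (hab : a < b)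
    (hg : ∀ t ∈ Icc a b, g t ∈ Ioc 0 C) (hp : p.1 ∈ Icc a b) (hq : q.1 ∈ Icc a b) {ε : ℝ}
    (hε : 0 < ε) :
    ∃ n σ, WPChain (Icc a b) g p q n σ ∧
      nullLength σ n ≤ |q.1 - p.1| + C * dist p.2 q.2 + ε := by
  obtain ⟨hvert, hvert_len⟩ := wpChain_pair (g := g) hp hq (q := (q.1, p.2))
    (wpCausal_or_of_mul_dist_le hg hp hq (by simp))
  obtain ⟨m, τ, hτ, hτ_len⟩ := exists_wpChain_horizontal hX hab hg hq p.2 q.2 hε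
  obtain ⟨hchain, hlen⟩ := WPChain.append hvert hτ
  exact ⟨_, _, hchain, by rw [hlen, hvert_len]; linarith⟩

theorem nullDist_le_abs_add_mul_dist (hX : IsLengthSpace X) (hab : a < b)
    (hg : ∀ t ∈ Icc a b, g t ∈ Ioc 0 C) (hp : p.1 ∈ Icc a b) (hq : q.1 ∈ Icc a b) :
    nullDist (Icc a b) g p q ≤ |q.1 - p.1| + C * dist p.2 q.2 := by
  refine le_of_forall_pos_le_add fun ε hε => ?_
  obtain ⟨n, σ, h, hlen⟩ := exists_wpChain_nullLength_le hX hab hg hp hq hε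
  exact (nullDist_le_nullLength h).trans hlen

theorem exists_wpChain (hX : IsLengthSpace X) (hab : a < b) (hg : ∀ t ∈ Icc a b, g t ∈ Ioc 0 C)
    (hp : p.1 ∈ Icc a b) (hq : q.1 ∈ Icc a b) : ∃ n σ, WPChain (Icc a b) g p q n σ :=
  let ⟨n, σ, h, _⟩ := exists_wpChain_nullLength_le hX hab hg hp hq one_pos
  ⟨n, σ, h⟩

theorem max_le_nullDist (hX : IsLengthSpace X) (hab : a < b) (hc : 0 < c)
    (hg : ∀ t ∈ Icc a b, g t ∈ Icc c C) (hp : p.1 ∈ Icc a b) (hq : q.1 ∈ Icc a b) :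
    max |q.1 - p.1| (c * dist p.2 q.2) ≤ nullDist (Icc a b) g p q := by
  have hne := exists_wpChain hX hab (fun t ht => Icc_subset_Ioc hc le_rfl (hg t ht)) hp hq
  have htime := le_mul_nullDist (ρ := fun p q => |q.1 - p.1|) one_pos
    (fun p q _ _ => abs_sub_comm _ _)
    (fun p q r _ _ _ => (abs_sub_le r.1 q.1 p.1).trans_eq (add_comm _ _))
    (fun p q _ _ h => by rw [one_mul, abs_of_nonneg (sub_nonneg.2 h.1)]) hne
  have hspace := le_mul_nullDist (ρ := fun p q => c * dist p.2 q.2) one_pos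
    (fun p q _ _ => by rw [dist_comm])
    (fun p q r _ _ _ => by
      rw [← mul_add]; exact mul_le_mul_of_nonneg_left (dist_triangle _ _ _) hc.le)
    (fun p q hp hq h => by rw [one_mul]; exact h.mul_dist_le hc (fun t ht => (hg t ht).1) hp hq)
    hne
  rw [one_mul] at htime hspace
  exact max_le htime hspace

theorem isMetricOnStrip_nullDist (hX : IsLengthSpace X) (hab : a < b) (hc : 0 < c)
    (hg : ∀ t ∈ Icc a b, g t ∈ Icc c C) :
    IsMetricOnStrip (Icc a b) (nullDist (X := X) (Icc a b) g) := by
  have hg' : ∀ t ∈ Icc a b, g t ∈ Ioc 0 C := fun t ht => Icc_subset_Ioc hc le_rfl (hg t ht)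
  refine ⟨fun p q hp hq => ⟨fun h => ?_, ?_⟩, fun p q _ _ => nullDist_comm p q,
    fun p q r hp hq hr => nullDist_triangle (exists_wpChain hX hab hg' hp hq)
      (exists_wpChain hX hab hg' hq hr)⟩
  · have hle := h ▸ max_le_nullDist hX hab hc hg hp hq
    have htime : |q.1 - p.1| ≤ 0 := (le_max_left _ _).trans hle
    have hspace : c * dist p.2 q.2 ≤ 0 := (le_max_right _ _).trans hle
    exact Prod.ext (by linarith [abs_nonpos_iff.1 htime])
      (dist_le_zero.1 (nonpos_of_mul_nonpos_right hspace hc))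
  · rintro rfl
    refine le_antisymm (by simpa using (WPCausal.refl g p).nullDist_le hp hp) ?_
    simpa using max_le_nullDist hX hab hc hg hp hp

end Strip

theorem inducesProductTopology_of_le_of_le {X : Type u} [MetricSpace X] {I : Set ℝ}
    {d : ℝ × X → ℝ × X → ℝ} {c C : ℝ} (hc : 0 < c) (hC : 0 ≤ C)
    (hlow : ∀ p q : ℝ × X, p.1 ∈ I → q.1 ∈ I → max |q.1 - p.1| (c * dist p.2 q.2) ≤ d p q)
    (hup : ∀ p q : ℝ × X, p.1 ∈ I → q.1 ∈ I → d p q ≤ |q.1 - p.1| + C * dist p.2 q.2) :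
    InducesProductTopology I d := by
  intro p hp ε hε
  refine ⟨⟨ε / (1 + C), by positivity, fun q hq hlt => ?_⟩,
    ⟨min ε (c * ε), by positivity, fun q hq hlt => ?_⟩⟩
  · rw [max_lt_iff, abs_sub_comm] at hlt
    calc d p q ≤ |q.1 - p.1| + C * dist p.2 q.2 := hup p q hp hq
      _ < ε / (1 + C) + C * (ε / (1 + C)) :=
          add_lt_add_of_lt_of_le hlt.1 (mul_le_mul_of_nonneg_left hlt.2.le hC)
      _ = ε := by field_simp
  · have hle := (hlow p q hp hq).trans_lt hlt
    rw [max_lt_iff, lt_min_iff, lt_min_iff] at hle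
    rw [max_lt_iff, abs_sub_comm]
    exact ⟨hle.1.1, lt_of_mul_lt_mul_left hle.2.2 hc.le⟩

section Comparison

theorem setLIntegral_inv_le_add {g g' : ℝ → ℝ} {u v δ : ℝ} (huv : u ≤ v)
    (hinv : ∀ t ∈ Ioc u v, (g t)⁻¹ ≤ (g' t)⁻¹ + δ) :
    ∫⁻ t in Ioc u v, ENNReal.ofReal (g t)⁻¹ ≤
      (∫⁻ t in Ioc u v, ENNReal.ofReal (g' t)⁻¹) + ENNReal.ofReal ((v - u) * δ) := by
  calc ∫⁻ t in Ioc u v, ENNReal.ofReal (g t)⁻¹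
      ≤ ∫⁻ t in Ioc u v, (ENNReal.ofReal (g' t)⁻¹ + ENNReal.ofReal δ) :=
        setLIntegral_mono' measurableSet_Ioc fun t ht =>
          (ENNReal.ofReal_le_ofReal (hinv t ht)).trans ENNReal.ofReal_add_le
    _ = (∫⁻ t in Ioc u v, ENNReal.ofReal (g' t)⁻¹) + ENNReal.ofReal ((v - u) * δ) := by
        rw [lintegral_add_right _ measurable_const, setLIntegral_const, Real.volume_Ioc,
          ENNReal.ofReal_mul (sub_nonneg.2 huv), mul_comm]

variable {X : Type u} [MetricSpace X] {a b c C δ : ℝ} {g g' : ℝ → ℝ} {p q : ℝ × X}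

theorem WPCausal.nullDist_le_of_inv_le (hX : IsLengthSpace X) (hab : a < b) (hc : 0 < c)
    (hg' : ∀ t ∈ Icc a b, g' t ∈ Icc c C) (hδ : 0 ≤ δ)
    (hinv : ∀ t ∈ Icc a b, (g t)⁻¹ ≤ (g' t)⁻¹ + δ) (hp : p.1 ∈ Icc a b) (hq : q.1 ∈ Icc a b)
    (h : WPCausal g p q) :
    nullDist (Icc a b) g' p q ≤ (1 + C * δ) * (q.1 - p.1) := by
  have hg'' : ∀ t ∈ Icc a b, g' t ∈ Ioc 0 C := fun t ht => Icc_subset_Ioc hc le_rfl (hg' t ht)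
  have hC : 0 < C := hc.trans_le ((hg' p.1 hp).1.trans (hg' p.1 hp).2)
  set D := dist p.2 q.2
  set r := (q.1 - p.1) * δ
  have hr : 0 ≤ r := mul_nonneg (sub_nonneg.2 h.1) hδ
  have hint : ENNReal.ofReal D ≤
      (∫⁻ t in Ioc p.1 q.1, ENNReal.ofReal (g' t)⁻¹) + ENNReal.ofReal r :=
    h.2.trans (setLIntegral_inv_le_add h.1 fun t ht => hinv t (Ioc_subset_Icc_of_mem hp hq ht))
  refine le_of_forall_pos_le_add fun ε hε => ?_
  obtain ⟨w, hpw, hwq⟩ := hX.exists_dist_le_and_dist_le p.2 q.2 (le_max_right (D - r) 0)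
    (max_le (by linarith) dist_nonneg) (div_pos hε hC)
  have hcausal : WPCausal g' p (q.1, w) := by
    refine ⟨h.1, le_trans ?_ (tsub_le_iff_right.2 hint)⟩
    rw [← ENNReal.ofReal_sub _ hr]
    exact ENNReal.ofReal_le_ofReal_iff'.2 (le_max_iff.1 hpw)
  have hwq' : C * dist w q.2 ≤ C * r + ε := by
    have := mul_le_mul_of_nonneg_left
      (show dist w q.2 ≤ r + ε / C by linarith [le_max_left (D - r) 0]) hC.le
    rwa [mul_add, mul_div_cancel₀ _ hC.ne'] at this
  calc nullDist (Icc a b) g' p q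
      ≤ nullDist (Icc a b) g' p (q.1, w) + nullDist (Icc a b) g' (q.1, w) q :=
        nullDist_triangle (exists_wpChain hX hab hg'' hp hq) (exists_wpChain hX hab hg'' hq hq)
    _ ≤ (q.1 - p.1) + (|q.1 - q.1| + C * dist w q.2) :=
        add_le_add (hcausal.nullDist_le hp hq) (nullDist_le_abs_add_mul_dist hX hab hg'' hq hq)
    _ ≤ (1 + C * δ) * (q.1 - p.1) + ε := by simp only [sub_self, abs_zero]; linarith

theorem nullDist_le_mul_nullDist (hX : IsLengthSpace X) (hab : a < b) (hc : 0 < c)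
    (hg : ∀ t ∈ Icc a b, g t ∈ Icc c C) (hg' : ∀ t ∈ Icc a b, g' t ∈ Icc c C) (hδ : 0 ≤ δ)
    (hinv : ∀ t ∈ Icc a b, (g t)⁻¹ ≤ (g' t)⁻¹ + δ) (hp : p.1 ∈ Icc a b) (hq : q.1 ∈ Icc a b) :
    nullDist (Icc a b) g' p q ≤ (1 + C * δ) * nullDist (Icc a b) g p q := by
  have hC : 0 ≤ C := hc.le.trans ((hg p.1 hp).1.trans (hg p.1 hp).2)
  exact le_mul_nullDist (by positivity) (fun p q _ _ => nullDist_comm p q)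
    (isMetricOnStrip_nullDist hX hab hc hg').2.2
    (fun p q hp hq h => h.nullDist_le_of_inv_le hX hab hc hg' hδ hinv hp hq)
    (exists_wpChain hX hab (fun t ht => Icc_subset_Ioc hc le_rfl (hg t ht)) hp hq)

theorem abs_nullDist_sub_le (hX : IsLengthSpace X) (hab : a < b) (hc : 0 < c)
    (hg : ∀ t ∈ Icc a b, g t ∈ Icc c C) (hg' : ∀ t ∈ Icc a b, g' t ∈ Icc c C)
    (hinv : ∀ t ∈ Icc a b, |(g t)⁻¹ - (g' t)⁻¹| ≤ δ) {D : ℝ} (hD : ∀ x y : X, dist x y ≤ D)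
    (hp : p.1 ∈ Icc a b) (hq : q.1 ∈ Icc a b) :
    |nullDist (Icc a b) g p q - nullDist (Icc a b) g' p q| ≤ C * δ * (b - a + C * D) := by
  have hC : 0 ≤ C := hc.le.trans ((hg p.1 hp).1.trans (hg p.1 hp).2)
  have hδ : 0 ≤ δ := (abs_nonneg _).trans (hinv p.1 hp)
  have hbound : ∀ {g : ℝ → ℝ}, (∀ t ∈ Icc a b, g t ∈ Icc c C) →
      nullDist (Icc a b) g p q ≤ b - a + C * D := fun hg => by
    refine (nullDist_le_abs_add_mul_dist hX hab
      (fun t ht => Icc_subset_Ioc hc le_rfl (hg t ht)) hp hq).trans (add_le_add ?_ ?_)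
    · exact abs_sub_le_iff.2 ⟨by linarith [hq.2, hp.1], by linarith [hp.2, hq.1]⟩
    · exact mul_le_mul_of_nonneg_left (hD _ _) hC
  have h₁ := nullDist_le_mul_nullDist hX hab hc hg hg' hδ
    (fun t ht => by linarith [(abs_sub_le_iff.1 (hinv t ht)).1]) hp hq
  have h₂ := nullDist_le_mul_nullDist hX hab hc hg' hg hδ
    (fun t ht => by linarith [(abs_sub_le_iff.1 (hinv t ht)).2]) hp hq
  have hCδ : 0 ≤ C * δ := mul_nonneg hC hδ
  rw [abs_sub_le_iff]
  constructor <;> nlinarith [hbound hg, hbound hg']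

end Comparison

section GromovHausdorff

variable {X : Type u} {I : Set ℝ} {d d' : ℝ × X → ℝ × X → ℝ}

abbrev IsMetricOnStrip.toMetricSpace (hd : IsMetricOnStrip I d) :
    MetricSpace {p : ℝ × X // p.1 ∈ I} where
  dist u v := d u v
  dist_self u := (hd.1 u u u.2 u.2).2 rfl
  dist_comm u v := hd.2.1 u v u.2 v.2
  dist_triangle u v w := hd.2.2 u v w u.2 v.2 w.2
  eq_of_dist_eq_zero {u v} h := Subtype.ext ((hd.1 u v u.2 v.2).1 h)

theorem ghClose_of_abs_sub_le [Nonempty X] (hI : I.Nonempty) (hd : IsMetricOnStrip I d)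
    (hd' : IsMetricOnStrip I d') {ε : ℝ} (hε : 0 < ε)
    (h : ∀ p q : ℝ × X, p.1 ∈ I → q.1 ∈ I → |d p q - d' p q| ≤ ε) : GHClose I d d' ε := by
  let S := {p : ℝ × X // p.1 ∈ I}
  have : Nonempty S := ⟨⟨(hI.some, Classical.arbitrary X), hI.some_mem⟩⟩
  let Z : MetricSpace (S ⊕ S) := @Metric.glueMetricApprox S S S hd.toMetricSpace
    hd'.toMetricSpace _ id id (ε / 2) (half_pos hε) fun u v =>
      show |d u v - d' u v| ≤ 2 * (ε / 2) by linarith [h u v u.2 v.2]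
  refine ⟨S ⊕ S, Z.dist, ⟨fun z w => ⟨Z.eq_of_dist_eq_zero, fun h => h ▸ Z.dist_self z⟩,
    Z.dist_comm, Z.dist_triangle⟩, Sum.inl, Sum.inr, fun _ _ => rfl, fun _ _ => by rfl,
    fun u => ⟨u, ?_⟩, fun u => ⟨u, ?_⟩⟩ <;>
  exact (@Metric.glueDist_glued_points S S S hd.toMetricSpace hd'.toMetricSpace _ id id
    (ε / 2) u).le.trans (half_le_self hε.le)

end GromovHausdorff

theorem nullDist_isMetricOnStrip_and_inducesProductTopology {X : Type u} [MetricSpace X]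
    {a b c : ℝ} {g : ℝ → ℝ} (hX : IsLengthSpace X) (hab : a < b) (hc : 0 < c)
    (hcont : ContinuousOn g (Icc a b)) (hgc : ∀ t ∈ Icc a b, c ≤ g t) :
    IsMetricOnStrip (Icc a b) (nullDist (X := X) (Icc a b) g) ∧
      InducesProductTopology (Icc a b) (nullDist (X := X) (Icc a b) g) := by
  obtain ⟨C, hC⟩ := isCompact_Icc.bddAbove_image hcont
  have hg : ∀ t ∈ Icc a b, g t ∈ Icc c C := fun t ht => ⟨hgc t ht, hC ⟨t, ht, rfl⟩⟩
  have ha : a ∈ Icc a b := left_mem_Icc.2 hab.le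
  have hC₀ : 0 ≤ C := hc.le.trans ((hg a ha).1.trans (hg a ha).2)
  refine ⟨isMetricOnStrip_nullDist hX hab hc hg, inducesProductTopology_of_le_of_le hc hC₀
    (fun p q hp hq => max_le_nullDist hX hab hc hg hp hq)
    (fun p q hp hq => nullDist_le_abs_add_mul_dist hX hab
      (fun t ht => Icc_subset_Ioc hc le_rfl (hg t ht)) hp hq)⟩

theorem eventually_ghClose_nullDist {X : Type u} [MetricSpace X] [CompactSpace X] [Nonempty X]
    {ι : Type*} {l : Filter ι} {a b c : ℝ} {f : ι → ℝ → ℝ} {flim : ℝ → ℝ} (hX : IsLengthSpace X)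
    (hab : a < b) (hc : 0 < c) (hlow : ∀ j, ∀ t ∈ Icc a b, c ≤ f j t)
    (hlim_low : ∀ t ∈ Icc a b, c ≤ flim t) (hlim_bdd : BddAbove (flim '' Icc a b))
    (hunif : TendstoUniformlyOn f flim l (Icc a b)) {ε : ℝ} (hε : 0 < ε) :
    ∀ᶠ j in l, GHClose (Icc a b) (nullDist (X := X) (Icc a b) (f j))
      (nullDist (X := X) (Icc a b) flim) ε := by
  obtain ⟨C, hC⟩ := hlim_bdd
  have hlim_mem : ∀ t ∈ Icc a b, flim t ∈ Icc c (C + c) := fun t ht =>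
    ⟨hlim_low t ht, by linarith [hC ⟨t, ht, rfl⟩]⟩
  set D := Metric.diam (univ : Set X)
  have hD : ∀ x y : X, dist x y ≤ D := fun x y =>
    Metric.dist_le_diam_of_mem isCompact_univ.isBounded trivial trivial
  have hB : 0 < (C + c) * (b - a + (C + c) * D) := by
    have hCc := hlim_mem a (left_mem_Icc.2 hab.le)
    have : 0 < C + c := by linarith [hCc.1, hCc.2]
    have : 0 < b - a := sub_pos.2 hab
    have : 0 ≤ D := Metric.diam_nonneg
    positivity
  filter_upwards [Metric.tendstoUniformlyOn_iff.1 hunif c hc, Metric.tendstoUniformlyOn_iff.1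
    (hunif.inv_of_le hc hlow hlim_low) _ (div_pos hε hB)] with j hclose hinv
  have hfj_mem : ∀ t ∈ Icc a b, f j t ∈ Icc c (C + c) := fun t ht =>
    ⟨hlow j t ht, by linarith [hC ⟨t, ht, rfl⟩, abs_sub_lt_iff.1 (hclose t ht)]⟩
  refine ghClose_of_abs_sub_le (nonempty_Icc.2 hab.le) (isMetricOnStrip_nullDist hX hab hc hfj_mem)
    (isMetricOnStrip_nullDist hX hab hc hlim_mem) hε fun p q hp hq => ?_
  calc _ ≤ (C + c) * (ε / ((C + c) * (b - a + (C + c) * D))) * (b - a + (C + c) * D) :=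
        abs_nullDist_sub_le hX hab hc hfj_mem hlim_mem
          (fun t ht => by rw [abs_sub_comm, ← Real.dist_eq]; exact (hinv t ht).le) hD hp hq
    _ = ε := by rw [mul_right_comm, mul_div_cancel₀ _ hB.ne']

/-- for a nonempty compact length space `X`, `I = [a,b]` with `a < b`, and
continuous warping functions `f_j ≥ c > 0` converging uniformly on `I` to `f_∞`, each null
distance `d̂_{f_j}` and `d̂_{f_∞}` is a metric on `I × X` inducing the product topology,
and `d_GH((I × X, d̂_{f_j}), (I × X, d̂_{f_∞})) → 0` as `j → ∞`. -/
theorem stmt12 {X : Type u} [MetricSpace X] [CompactSpace X] [Nonempty X]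
    (hX : ∀ x y : X, ∀ ε : ℝ, 0 < ε →
      ∃ z : X, max (dist x z) (dist z y) ≤ dist x y / 2 + ε)
    (a b : ℝ) (hab : a < b)
    (c : ℝ) (hc : 0 < c)
    (f : ℕ → ℝ → ℝ) (flim : ℝ → ℝ)
    (hcont : ∀ j, ContinuousOn (f j) (Set.Icc a b))
    (hlow : ∀ j, ∀ t ∈ Set.Icc a b, c ≤ f j t)
    (hunif : TendstoUniformlyOn f flim Filter.atTop (Set.Icc a b)) :
    (∀ j, IsMetricOnStrip (Set.Icc a b) (nullDist (X := X) (Set.Icc a b) (f j)) ∧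
      InducesProductTopology (Set.Icc a b) (nullDist (X := X) (Set.Icc a b) (f j))) ∧
    (IsMetricOnStrip (Set.Icc a b) (nullDist (X := X) (Set.Icc a b) flim) ∧
      InducesProductTopology (Set.Icc a b) (nullDist (X := X) (Set.Icc a b) flim)) ∧
    (∀ ε : ℝ, 0 < ε → ∃ N : ℕ, ∀ j ≥ N,
      GHClose (Set.Icc a b) (nullDist (X := X) (Set.Icc a b) (f j))
        (nullDist (X := X) (Set.Icc a b) flim) ε) := by
  have hlim_cont : ContinuousOn flim (Icc a b) :=
    hunif.continuousOn (Filter.Eventually.of_forall hcont).frequently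
  have hlim_low : ∀ t ∈ Icc a b, c ≤ flim t := fun t ht =>
    ge_of_tendsto (hunif.tendsto_at ht) (Filter.Eventually.of_forall fun j => hlow j t ht)
  exact ⟨fun j => nullDist_isMetricOnStrip_and_inducesProductTopology hX hab hc (hcont j) (hlow j),
    nullDist_isMetricOnStrip_and_inducesProductTopology hX hab hc hlim_cont hlim_low,
    fun ε hε => Filter.eventually_atTop.1 (eventually_ghClose_nullDist hX hab hc hlow hlim_low
      (isCompact_Icc.bddAbove_image hlim_cont) hunif hε)⟩
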